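/- arXiv:1411.7345 — 4 statements merged into one kernel-verified Lean document; each statement's English description precedes it below -/
import Mathlib

section
/- Let $A > 1$ and let $\mu$ satisfy $1 < \mu < (1+A)^2/(4A)$. Then the equation $\mu = y + A|1-y|y$ has exactly three real solutions $y_1 < y_2 < y_3$, and these satisfy $y_1 < (1+A)/(2A) < y_2 < 1 < y_3$. -/
/-!
On each side of `y = 1` the absolute value disappears and `μ = y + A|1 - y|y` becomes a
quadratic equation: `A y² - (1 + A) y + μ = 0` for `y ≤ 1` and `A y² + (1 - A) y - μ = 0` for
`y ≥ 1`. For `1 < μ < (1 + A)²/(4A)` the first has two roots, symmetric about its vertex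
`(1 + A)/(2A)` and both below `1`, while the second has one root above `1` and one below `0`.
-/

open Real

lemma stommel_eq_iff_of_le_one {A μ y : ℝ} (hy : y ≤ 1) :
    μ = y + A * |1 - y| * y ↔ A * (y * y) + -(1 + A) * y + μ = 0 := by
  rw [abs_of_nonneg (sub_nonneg.2 hy)]
  constructor <;> intro h <;> linarith

lemma stommel_eq_iff_of_one_le {A μ y : ℝ} (hy : 1 ≤ y) :
    μ = y + A * |1 - y| * y ↔ A * (y * y) + (1 - A) * y + -μ = 0 := by
  rw [abs_of_nonpos (sub_nonpos.2 hy)]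
  constructor <;> intro h <;> linarith

lemma exists_sqrt_discrim_left_branch {A μ : ℝ} (hA : 1 < A) (hμ1 : 1 < μ)
    (hμ2 : μ < (1 + A) ^ 2 / (4 * A)) :
    ∃ s, discrim A (-(1 + A)) μ = s * s ∧ 0 < s ∧ s < A - 1 := by
  have hμ2' : μ * (4 * A) < (1 + A) ^ 2 := (lt_div_iff₀ (by positivity)).1 hμ2
  have hD : 0 < discrim A (-(1 + A)) μ := by rw [discrim]; linarith
  refine ⟨√(discrim A (-(1 + A)) μ), (mul_self_sqrt hD.le).symm, sqrt_pos.2 hD, ?_⟩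
  rw [sqrt_lt' (by linarith), discrim]
  nlinarith

lemma exists_sqrt_discrim_right_branch {A μ : ℝ} (hA : 0 < A) (hμ1 : 1 < μ) :
    ∃ s, discrim A (1 - A) (-μ) = s * s ∧ A + 1 < s := by
  have hD : 0 ≤ discrim A (1 - A) (-μ) := by rw [discrim]; nlinarith
  refine ⟨√(discrim A (1 - A) (-μ)), (mul_self_sqrt hD).symm, ?_⟩
  rw [lt_sqrt (by linarith), discrim]
  nlinarith

lemma stommel_eq_iff {A μ s₁ s₂ y : ℝ} (hA : 0 < A)
    (hs₁ : discrim A (-(1 + A)) μ = s₁ * s₁) (hs₁pos : 0 ≤ s₁) (hs₁lt : s₁ < A - 1)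
    (hs₂ : discrim A (1 - A) (-μ) = s₂ * s₂) (hs₂gt : A + 1 < s₂) :
    μ = y + A * |1 - y| * y ↔
      y = (1 + A - s₁) / (2 * A) ∨ y = (1 + A + s₁) / (2 * A) ∨ y = (A - 1 + s₂) / (2 * A) := by
  have h2A : 0 < 2 * A := by linarith
  have hy₁ : (1 + A - s₁) / (2 * A) < 1 := (div_lt_one h2A).2 (by linarith)
  have hy₂ : (1 + A + s₁) / (2 * A) < 1 := (div_lt_one h2A).2 (by linarith)
  have hy₃ : 1 < (A - 1 + s₂) / (2 * A) := (one_lt_div h2A).2 (by linarith)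
  have hy₄ : (A - 1 - s₂) / (2 * A) < 1 := (div_lt_one h2A).2 (by linarith)
  rcases le_or_gt y 1 with hy | hy
  · rw [stommel_eq_iff_of_le_one hy, quadratic_eq_zero_iff hA.ne' hs₁, neg_neg]
    have : y ≠ (A - 1 + s₂) / (2 * A) := (hy.trans_lt hy₃).ne
    tauto
  · rw [stommel_eq_iff_of_one_le hy.le, quadratic_eq_zero_iff hA.ne' hs₂, neg_sub]
    have : y ≠ (1 + A - s₁) / (2 * A) := (hy₁.trans hy).ne'
    have : y ≠ (1 + A + s₁) / (2 * A) := (hy₂.trans hy).ne'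
    have : y ≠ (A - 1 - s₂) / (2 * A) := (hy₄.trans hy).ne'
    tauto

/-- For `A > 1` and `1 < μ < (1+A)²/(4A)`, the equation `μ = y + A|1-y|y` has
exactly three solutions `y₁ < y₂ < y₃`, located as
`y₁ < (1+A)/(2A) < y₂ < 1 < y₃`. -/
theorem stommel_three_equilibria (A μ : ℝ) (hA : 1 < A)
    (hμ1 : 1 < μ) (hμ2 : μ < (1 + A) ^ 2 / (4 * A)) :
    ∃ y₁ y₂ y₃ : ℝ, y₁ < y₂ ∧ y₂ < y₃ ∧
      (∀ y : ℝ, μ = y + A * |1 - y| * y ↔ (y = y₁ ∨ y = y₂ ∨ y = y₃)) ∧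
      y₁ < (1 + A) / (2 * A) ∧ (1 + A) / (2 * A) < y₂ ∧ y₂ < 1 ∧ 1 < y₃ := by
  have hA₀ : 0 < A := by linarith
  have h2A : 0 < 2 * A := by linarith
  obtain ⟨s₁, hs₁, hs₁pos, hs₁lt⟩ := exists_sqrt_discrim_left_branch hA hμ1 hμ2
  obtain ⟨s₂, hs₂, hs₂gt⟩ := exists_sqrt_discrim_right_branch hA₀ hμ1
  refine ⟨(1 + A - s₁) / (2 * A), (1 + A + s₁) / (2 * A), (A - 1 + s₂) / (2 * A), ?_, ?_,
    fun y ↦ stommel_eq_iff hA₀ hs₁ hs₁pos.le hs₁lt hs₂ hs₂gt, ?_, ?_, ?_, ?_⟩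
  · exact div_lt_div_of_pos_right (by linarith) h2A
  · exact div_lt_div_of_pos_right (by linarith) h2A
  · exact div_lt_div_of_pos_right (by linarith) h2A
  · exact div_lt_div_of_pos_right (by linarith) h2A
  · exact (div_lt_one h2A).2 (by linarith)
  · exact (one_lt_div h2A).2 (by linarith)
end

section
/- Let $A > 1$ and let $\mu \in \mathbb{R}$ satisfy either $\mu < 1$ or $\mu > (1+A)^2/(4A)$. Then the equation $\mu = y + A|1-y|y$ has exactly one real solution; if $\mu < 1$ the solution satisfies $y < (1+A)/(2A)$, and if $\mu > (1+A)^2/(4A)$ the solution satisfies $y > 1$. -/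
/-!
For `A ≥ 1`, `F_A` increases on `(-∞, c]` with `c = (1+A)/(2A)`, decreases on `[c, 1]` and
increases again on `[1, ∞)`; its local maximum is `F_A(c) = (1+A)²/(4A)` and its local minimum
`F_A(1) = 1`. A value `μ < 1` is therefore only attained left of `c`, and a value above
`(1+A)²/(4A)` only right of `1`; on each of these branches `F_A` is strictly increasing and
unbounded, so the intermediate value theorem gives exactly one solution.
-/

open Set

section

def stommelF (A y : ℝ) : ℝ := y + A * |1 - y| * y

variable {A y : ℝ}

lemma stommelF_of_le_one (hy : y ≤ 1) : stommelF A y = (1 + A) * y - A * y ^ 2 := by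
  rw [stommelF, abs_of_nonneg (by linarith)]
  ring

lemma stommelF_of_one_le (hy : 1 ≤ y) : stommelF A y = (1 - A) * y + A * y ^ 2 := by
  rw [stommelF, abs_of_nonpos (by linarith)]
  ring

lemma continuous_stommelF (A : ℝ) : Continuous (stommelF A) := by
  unfold stommelF
  fun_prop

lemma stommelF_le_self_of_nonpos (hA : 0 ≤ A) (hy : y ≤ 0) : stommelF A y ≤ y := by
  have : 0 ≤ A * |1 - y| := by positivity
  unfold stommelF
  nlinarith

lemma le_stommelF_self_of_nonneg (hA : 0 ≤ A) (hy : 0 ≤ y) : y ≤ stommelF A y := by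
  unfold stommelF
  exact le_add_of_nonneg_right (by positivity)

lemma one_le_stommel_max (hA : 0 < A) : 1 ≤ (1 + A) ^ 2 / (4 * A) := by
  rw [le_div_iff₀ (by positivity)]
  nlinarith [sq_nonneg (A - 1)]

-- `(1+A)²/(4A) - F_A(y) = A (y - (1+A)/(2A))²` on the branch `y ≤ 1`.
lemma stommelF_le_max (hA : 0 < A) (hy : y ≤ 1) : stommelF A y ≤ (1 + A) ^ 2 / (4 * A) := by
  rw [stommelF_of_le_one hy, le_div_iff₀ (by positivity)]
  nlinarith [sq_nonneg (2 * A * y - (1 + A))]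

lemma one_le_stommelF (hA : 1 ≤ A) (hy : (1 + A) / (2 * A) ≤ y) : 1 ≤ stommelF A y := by
  have hAy : 1 ≤ A * y := by
    rw [div_le_iff₀ (by positivity)] at hy
    linarith
  rcases le_total y 1 with hy1 | hy1
  · rw [stommelF_of_le_one hy1]
    nlinarith
  · rw [stommelF_of_one_le hy1]
    nlinarith

lemma strictMonoOn_stommelF_Iic (hA : 1 ≤ A) :
    StrictMonoOn (stommelF A) (Iic ((1 + A) / (2 * A))) := by
  intro y hy z hz hyz
  have hc : (1 + A) / (2 * A) ≤ 1 := by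
    rw [div_le_one (by positivity)]
    linarith
  rw [mem_Iic] at hy hz
  rw [stommelF_of_le_one (hy.trans hc), stommelF_of_le_one (hz.trans hc)]
  rw [le_div_iff₀ (by positivity)] at hy hz
  have hsum : A * (y + z) < 1 + A := by nlinarith
  nlinarith

lemma strictMonoOn_stommelF_Ici (hA : 0 ≤ A) : StrictMonoOn (stommelF A) (Ici 1) := by
  intro y hy z hz hyz
  rw [mem_Ici] at hy hz
  rw [stommelF_of_one_le hy, stommelF_of_one_le hz]
  have hsum : 0 ≤ A * (y + z - 2) := mul_nonneg hA (by linarith)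
  nlinarith

lemma exists_stommelF_eq_of_lt_one (hA : 1 ≤ A) {μ : ℝ} (hμ : μ < 1) :
    ∃ y < (1 + A) / (2 * A), stommelF A y = μ := by
  set c := (1 + A) / (2 * A)
  have hc : 0 ≤ c := by positivity
  have hlo : stommelF A (min μ 0) ≤ μ :=
    (stommelF_le_self_of_nonpos (by linarith) (min_le_right _ _)).trans (min_le_left _ _)
  have hhi : μ ≤ stommelF A c := hμ.le.trans (one_le_stommelF hA le_rfl)
  obtain ⟨y, ⟨-, hyc⟩, hy⟩ := intermediate_value_Icc ((min_le_right _ _).trans hc)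
    (continuous_stommelF A).continuousOn ⟨hlo, hhi⟩
  refine ⟨y, lt_of_le_of_ne hyc ?_, hy⟩
  rintro rfl
  linarith [one_le_stommelF hA hyc]

lemma exists_stommelF_eq_of_one_lt (hA : 0 ≤ A) {μ : ℝ} (hμ : 1 < μ) :
    ∃ y > 1, stommelF A y = μ := by
  have hlo : stommelF A 1 ≤ μ := by
    rw [stommelF_of_one_le le_rfl]
    linarith
  have hhi : μ ≤ stommelF A μ := le_stommelF_self_of_nonneg hA (by linarith)
  obtain ⟨y, ⟨hy1, -⟩, hy⟩ := intermediate_value_Icc hμ.le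
    (continuous_stommelF A).continuousOn ⟨hlo, hhi⟩
  refine ⟨y, lt_of_le_of_ne hy1 ?_, hy⟩
  rintro rfl
  rw [stommelF_of_one_le le_rfl] at hy
  linarith

end

/-- For `A > 1` and `μ` outside the bistable window `[1, (1+A)²/(4A)]`, the
equation `μ = y + A|1-y|y` has exactly one solution, located on the thermal
branch (`y < (1+A)/(2A)`) when `μ < 1` and on the haline branch (`y > 1`) when
`μ > (1+A)²/(4A)`. -/
theorem stommel_unique_equilibrium_outside_window (A μ : ℝ) (hA : 1 < A)
    (hμ : μ < 1 ∨ (1 + A) ^ 2 / (4 * A) < μ) :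
    ∃ y : ℝ, μ = y + A * |1 - y| * y ∧
      (∀ z : ℝ, μ = z + A * |1 - z| * z → z = y) ∧
      (μ < 1 → y < (1 + A) / (2 * A)) ∧
      ((1 + A) ^ 2 / (4 * A) < μ → 1 < y) := by
  have hmax := one_le_stommel_max (zero_lt_one.trans hA)
  rcases hμ with hμ | hμ
  · obtain ⟨y, hyc, rfl⟩ := exists_stommelF_eq_of_lt_one hA.le hμ
    refine ⟨y, rfl, fun z hz => ?_, fun _ => hyc, fun h => by linarith⟩
    have hzc : z < (1 + A) / (2 * A) := by
      by_contra! hzc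
      linarith [one_le_stommelF hA.le hzc, show stommelF A z = stommelF A y from hz.symm]
    exact (strictMonoOn_stommelF_Iic hA.le).injOn hzc.le hyc.le hz.symm
  · obtain ⟨y, hy1, rfl⟩ := exists_stommelF_eq_of_one_lt (zero_le_one.trans hA.le) (by linarith)
    refine ⟨y, rfl, fun z hz => ?_, fun h => by linarith, fun _ => hy1⟩
    have hz1 : 1 < z := by
      by_contra! hz1
      linarith [stommelF_le_max (zero_lt_one.trans hA) hz1,
        show stommelF A z = stommelF A y from hz.symm]
    exact (strictMonoOn_stommelF_Ici (zero_le_one.trans hA.le)).injOn hz1.le hy1.le hz.symm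
end

section
/- Let $0 < A < 1$ and $\mu \in \mathbb{R}$, and let $y^*$ be the unique real number with $\mu = y^* + A|1-y^*|y^*$. Then every differentiable function $y : [0, \infty) \to \mathbb{R}$ satisfying $\dot{y}(\tau) = \mu - y(\tau) - A|1 - y(\tau)| y(\tau)$ for all $\tau \ge 0$ converges to $y^*$ as $\tau \to \infty$. -/
/-!
Write `F y = y + A|1-y|y = (1-A) y + A (y + |1-y|y)`. The map `y ↦ y + |1-y|y` is nondecreasing
(it equals `1 - (1-y)²` for `y ≤ 1` and `y²` for `y ≥ 1`), so `F` is strongly monotone with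
constant `1 - A > 0`. Hence the vector field `μ - F` is dissipative about `y*`, and Grönwall's
inequality for `|y - y*|²` gives `|y τ - y*| ≤ |y 0 - y*| e^{-(1-A)τ}`.
-/

open Filter Real Set Topology

section Dissipative

variable {E : Type*} [NormedAddCommGroup E] [InnerProductSpace ℝ E]

theorem norm_sub_le_mul_exp_of_inner_le {f : E → E} {y : ℝ → E} {x₀ : E} {c : ℝ}
    (hf : ∀ x, inner ℝ (x - x₀) (f x) ≤ -c * ‖x - x₀‖ ^ 2)
    (hy : ∀ t ∈ Ici (0 : ℝ), HasDerivWithinAt y (f (y t)) (Ici 0) t) {t : ℝ} (ht : 0 ≤ t) :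
    ‖y t - x₀‖ ≤ ‖y 0 - x₀‖ * exp (-c * t) := by
  have hd : ∀ s ∈ Ici (0 : ℝ), HasDerivWithinAt (fun s => ‖y s - x₀‖ ^ 2)
      (2 * inner ℝ (y s - x₀) (f (y s))) (Ici 0) s :=
    fun s hs => ((hy s hs).sub_const x₀).norm_sq
  have hsq := le_gronwallBound_of_liminf_deriv_right_le (K := -2 * c) (ε := 0) (b := t)
    (fun s hs => (hd s hs.1).continuousWithinAt.mono Icc_subset_Ici_self)
    (fun s hs r hr => by
      simpa only [slope_def_field, div_eq_inv_mul] using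
        ((hd s hs.1).mono (Ici_subset_Ici.2 hs.1)).liminf_right_slope_le hr)
    le_rfl (fun s _ => by linarith [hf (y s)]) t ⟨ht, le_rfl⟩
  rw [gronwallBound_ε0, sub_zero] at hsq
  refine (pow_le_pow_iff_left₀ (norm_nonneg _) (by positivity) two_ne_zero).1 ?_
  calc ‖y t - x₀‖ ^ 2 ≤ ‖y 0 - x₀‖ ^ 2 * exp (-2 * c * t) := hsq
    _ = (‖y 0 - x₀‖ * exp (-c * t)) ^ 2 := by
      rw [mul_pow, ← exp_nat_mul]; ring_nf

theorem tendsto_of_hasDerivWithinAt_of_inner_le {f : E → E} {y : ℝ → E} {x₀ : E} {c : ℝ}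
    (hc : 0 < c) (hf : ∀ x, inner ℝ (x - x₀) (f x) ≤ -c * ‖x - x₀‖ ^ 2)
    (hy : ∀ t ∈ Ici (0 : ℝ), HasDerivWithinAt y (f (y t)) (Ici 0) t) :
    Tendsto y atTop (𝓝 x₀) := by
  rw [tendsto_iff_norm_sub_tendsto_zero]
  have hexp : Tendsto (fun t => ‖y 0 - x₀‖ * exp (-c * t)) atTop (𝓝 0) := by
    simpa using (tendsto_exp_atBot.comp
      (tendsto_id.const_mul_atTop_of_neg (neg_neg_of_pos hc))).const_mul ‖y 0 - x₀‖
  refine squeeze_zero' (Eventually.of_forall fun _ => norm_nonneg _) ?_ hexp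
  filter_upwards [eventually_ge_atTop 0] with t ht
  exact norm_sub_le_mul_exp_of_inner_le hf hy ht

end Dissipative

theorem monotone_add_abs_one_sub_mul_self : Monotone fun y : ℝ => y + |1 - y| * y := by
  intro a b hab
  simp only
  rcases le_total a 1 with ha | ha <;> rcases le_total b 1 with hb | hb
  · rw [abs_of_nonneg (sub_nonneg.2 ha), abs_of_nonneg (sub_nonneg.2 hb)]
    nlinarith
  · rw [abs_of_nonneg (sub_nonneg.2 ha), abs_of_nonpos (sub_nonpos.2 hb)]
    nlinarith
  · rw [show a = b by linarith]
  · rw [abs_of_nonpos (sub_nonpos.2 ha), abs_of_nonpos (sub_nonpos.2 hb)]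
    nlinarith

theorem stommel_rhs_dissipative {A : ℝ} (hA : 0 ≤ A) (x ystar : ℝ) :
    (x - ystar) * ((ystar + A * |1 - ystar| * ystar) - x - A * |1 - x| * x) ≤
      -(1 - A) * (x - ystar) ^ 2 := by
  have hmono : 0 ≤ (x - ystar) * ((x + |1 - x| * x) - (ystar + |1 - ystar| * ystar)) := by
    rcases le_total x ystar with h | h
    · exact mul_nonneg_of_nonpos_of_nonpos (sub_nonpos.2 h)
        (sub_nonpos.2 (monotone_add_abs_one_sub_mul_self h))
    · exact mul_nonneg (sub_nonneg.2 h) (sub_nonneg.2 (monotone_add_abs_one_sub_mul_self h))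
  nlinarith [mul_nonneg hA hmono]

/-- For `0 < A < 1`, every solution of the reduced Stommel equation
`ẏ = μ - y - A|1-y|y` on `[0,∞)` converges to the unique equilibrium `y*`. -/
theorem stommel_global_convergence_A_lt_one (A μ ystar : ℝ)
    (hA0 : 0 < A) (hA1 : A < 1)
    (hstar : μ = ystar + A * |1 - ystar| * ystar) :
    ∀ y : ℝ → ℝ,
      (∀ τ ∈ Set.Ici (0 : ℝ),
        HasDerivWithinAt y (μ - y τ - A * |1 - y τ| * y τ) (Set.Ici 0) τ) →
      Filter.Tendsto y Filter.atTop (nhds ystar) := by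
  intro y hy
  refine tendsto_of_hasDerivWithinAt_of_inner_le (f := fun x => μ - x - A * |1 - x| * x)
    (sub_pos.2 hA1) (fun x => ?_) hy
  rw [Real.inner_apply, Real.norm_eq_abs, sq_abs, hstar]
  exact stommel_rhs_dissipative hA0.le x ystar
end

section
/- Let $A > 1$ and $1 < \mu < (1+A)^2/(4A)$, and let $y_1 < y_2 < y_3$ be the three real solutions of $\mu = y + A|1-y|y$. Let $y : [0, \infty) \to \mathbb{R}$ be differentiable and satisfy $\dot{y}(\tau) = \mu - y(\tau) - A|1 - y(\tau)| y(\tau)$ for all $\tau \ge 0$. If $y(0) < y_2$ then $y(\tau) \to y_1$ as $\tau \to \infty$; if $y(0) > y_2$ then $y(\tau) \to y_3$ as $\tau \to \infty$; and if $y(0) = y_2$ then $y$ is constant. In particular, the outer equilibria $y_1$ and $y_3$ are stable and the middle equilibrium $y_2$ is unstable. -/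
/-!
Let `F(u) = μ - u - A|1 - u|u`. Since `F(0) = μ > 0`, `F((1+A)/(2A)) = μ - (1+A)²/(4A) < 0`,
`F(1) = μ - 1 > 0` and `F(2) = μ - 2 - 2A < 0`, the intermediate value theorem places one zero in
each gap, so these are `y₁ < y₂ < y₃`, and `F` has signs `+, -, +, -` on the four complementary
intervals. `F` is locally Lipschitz, so a solution that touches an equilibrium is constant, and a
solution that does not never crosses one. A solution therefore stays in a closed interval between
consecutive equilibria on which `F` has a fixed sign, so it is monotone and bounded and converges.
By the mean value theorem its limit is a zero of `F`: the endpoint it moves towards.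
-/

open Set Filter Topology

section Preconnected

variable {α : Type*} [TopologicalSpace α] {s : Set α} {g : α → ℝ} {c : ℝ} {x₀ x : α}

lemma IsPreconnected.lt_of_forall_ne (hs : IsPreconnected s) (hg : ContinuousOn g s)
    (hne : ∀ x ∈ s, g x ≠ c) (hx₀ : x₀ ∈ s) (h : g x₀ < c) (hx : x ∈ s) : g x < c := by
  by_contra! h'
  obtain ⟨z, hz, hgz⟩ := hs.intermediate_value hx₀ hx hg ⟨h.le, h'⟩
  exact hne z hz hgz

lemma IsPreconnected.gt_of_forall_ne (hs : IsPreconnected s) (hg : ContinuousOn g s)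
    (hne : ∀ x ∈ s, g x ≠ c) (hx₀ : x₀ ∈ s) (h : c < g x₀) (hx : x ∈ s) : c < g x := by
  by_contra! h'
  obtain ⟨z, hz, hgz⟩ := hs.intermediate_value hx hx₀ hg ⟨h', h.le⟩
  exact hne z hz hgz

end Preconnected

section ThreeZeros

variable {f : ℝ → ℝ} {s : Set ℝ} {w y₁ y₂ y₃ p₀ p₁ p₂ p₃ : ℝ}

lemma IsPreconnected.nonneg_on_closure (hs : IsPreconnected s) (hf : Continuous f)
    (hne : ∀ u ∈ s, f u ≠ 0) (hw : w ∈ s) (hfw : 0 < f w) : ∀ u ∈ closure s, 0 ≤ f u :=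
  fun _ hu => closure_minimal (fun _ hv => (hs.gt_of_forall_ne hf.continuousOn hne hw hfw hv).le)
    (isClosed_le continuous_const hf) hu

lemma IsPreconnected.nonpos_on_closure (hs : IsPreconnected s) (hf : Continuous f)
    (hne : ∀ u ∈ s, f u ≠ 0) (hw : w ∈ s) (hfw : f w < 0) : ∀ u ∈ closure s, f u ≤ 0 :=
  fun _ hu => closure_minimal (fun _ hv => (hs.lt_of_forall_ne hf.continuousOn hne hw hfw hv).le)
    (isClosed_le hf continuous_const) hu

lemma Continuous.zeros_interlace (hf : Continuous f) (h12 : y₁ < y₂) (h23 : y₂ < y₃)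
    (hzero : ∀ u, f u = 0 → u = y₁ ∨ u = y₂ ∨ u = y₃)
    (hp01 : p₀ < p₁) (hp12 : p₁ < p₂) (hp23 : p₂ < p₃)
    (h₀ : 0 < f p₀) (h₁ : f p₁ < 0) (h₂ : 0 < f p₂) (h₃ : f p₃ < 0) :
    p₀ < y₁ ∧ y₁ < p₁ ∧ p₁ < y₂ ∧ y₂ < p₂ ∧ p₂ < y₃ ∧ y₃ < p₃ := by
  obtain ⟨r₁, ⟨hr₁, hr₁'⟩, hfr₁⟩ := intermediate_value_Ioo' hp01.le hf.continuousOn ⟨h₁, h₀⟩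
  obtain ⟨r₂, ⟨hr₂, hr₂'⟩, hfr₂⟩ := intermediate_value_Ioo hp12.le hf.continuousOn ⟨h₁, h₂⟩
  obtain ⟨r₃, ⟨hr₃, hr₃'⟩, hfr₃⟩ := intermediate_value_Ioo' hp23.le hf.continuousOn ⟨h₃, h₂⟩
  rcases hzero r₁ hfr₁ with rfl | rfl | rfl <;> rcases hzero r₂ hfr₂ with rfl | rfl | rfl <;>
    rcases hzero r₃ hfr₃ with rfl | rfl | rfl <;>
    first | exact ⟨hr₁, hr₁', hr₂, hr₂', hr₃, hr₃'⟩ | (exfalso; linarith)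

lemma Continuous.sign_pattern_of_three_zeros (hf : Continuous f) (h12 : y₁ < y₂) (h23 : y₂ < y₃)
    (hzero : ∀ u, f u = 0 → u = y₁ ∨ u = y₂ ∨ u = y₃)
    (hp01 : p₀ < p₁) (hp12 : p₁ < p₂) (hp23 : p₂ < p₃)
    (h₀ : 0 < f p₀) (h₁ : f p₁ < 0) (h₂ : 0 < f p₂) (h₃ : f p₃ < 0) :
    (∀ u ≤ y₁, 0 ≤ f u) ∧ (∀ u ∈ Icc y₁ y₂, f u ≤ 0) ∧ (∀ u ∈ Icc y₂ y₃, 0 ≤ f u) ∧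
      ∀ u, y₃ ≤ u → f u ≤ 0 := by
  obtain ⟨hy₁, hy₁', hy₂, hy₂', hy₃, hy₃'⟩ :=
    hf.zeros_interlace h12 h23 hzero hp01 hp12 hp23 h₀ h₁ h₂ h₃
  refine ⟨fun u hu => ?_, fun u hu => ?_, fun u hu => ?_, fun u hu => ?_⟩
  · refine isPreconnected_Iio.nonneg_on_closure hf (fun v hv hv0 => ?_) (mem_Iio.2 hy₁) h₀ u
      (by rwa [closure_Iio])
    obtain rfl | rfl | rfl := hzero v hv0 <;> linarith [mem_Iio.1 hv]
  · refine isPreconnected_Ioo.nonpos_on_closure hf (fun v hv hv0 => ?_) ⟨hy₁', hy₂⟩ h₁ u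
      (by rwa [closure_Ioo h12.ne])
    obtain rfl | rfl | rfl := hzero v hv0 <;> linarith [hv.1, hv.2]
  · refine isPreconnected_Ioo.nonneg_on_closure hf (fun v hv hv0 => ?_) ⟨hy₂', hy₃⟩ h₂ u
      (by rwa [closure_Ioo h23.ne])
    obtain rfl | rfl | rfl := hzero v hv0 <;> linarith [hv.1, hv.2]
  · refine isPreconnected_Ioi.nonpos_on_closure hf (fun v hv hv0 => ?_) (mem_Ioi.2 hy₃') h₃ u
      (by rwa [closure_Ioi])
    obtain rfl | rfl | rfl := hzero v hv0 <;> linarith [mem_Ioi.1 hv]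

end ThreeZeros

def IsForwardSolution (f y : ℝ → ℝ) : Prop :=
  ∀ τ ∈ Ici (0 : ℝ), HasDerivWithinAt y (f (y τ)) (Ici 0) τ

namespace IsForwardSolution

variable {f y z : ℝ → ℝ} {c τ₀ L : ℝ}

lemma continuousOn (hy : IsForwardSolution f y) : ContinuousOn y (Ici 0) :=
  fun τ hτ => (hy τ hτ).continuousWithinAt

lemma hasDerivAt (hy : IsForwardSolution f y) {τ : ℝ} (hτ : 0 < τ) :
    HasDerivAt y (f (y τ)) τ :=
  (hy τ hτ.le).hasDerivAt (Ici_mem_nhds hτ)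

lemma const (hc : f c = 0) : IsForwardSolution f fun _ => c := fun τ _ => by
  simpa [hc] using hasDerivWithinAt_const τ (Ici 0) c

lemma neg (hy : IsForwardSolution f y) : IsForwardSolution (fun u => -f (-u)) (-y) :=
  fun τ hτ => by simpa using (hy τ hτ).neg

theorem eqOn (hf : LocallyLipschitz f) (hy : IsForwardSolution f y)
    (hz : IsForwardSolution f z) (hτ₀ : 0 ≤ τ₀) (h : y τ₀ = z τ₀) : EqOn y z (Ici 0) := by
  intro τ hτ
  set I := Icc 0 (max τ τ₀)
  have hI : I ⊆ Ici 0 := Icc_subset_Ici_self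
  obtain ⟨K, hK⟩ := hf.locallyLipschitzOn.exists_lipschitzOnWith_of_compact
    ((isCompact_Icc.image_of_continuousOn (hy.continuousOn.mono hI)).union
      (isCompact_Icc.image_of_continuousOn (hz.continuousOn.mono hI)))
  have hyI : ∀ t ∈ I, y t ∈ y '' I ∪ z '' I := fun t ht => .inl (mem_image_of_mem y ht)
  have hzI : ∀ t ∈ I, z t ∈ y '' I ∪ z '' I := fun t ht => .inr (mem_image_of_mem z ht)
  have hτ₀I : Ioc 0 τ₀ ⊆ I := Ioc_subset_Icc_self.trans (Icc_subset_Icc_right (le_max_right _ _))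
  have hτI : Ico 0 τ ⊆ I := Ico_subset_Icc_self.trans (Icc_subset_Icc_right (le_max_left _ _))
  have h0 : y 0 = z 0 := ODE_solution_unique_of_mem_Icc_left (fun _ _ => hK)
    (hy.continuousOn.mono Icc_subset_Ici_self) (fun t ht => (hy.hasDerivAt ht.1).hasDerivWithinAt)
    (fun t ht => hyI t (hτ₀I ht)) (hz.continuousOn.mono Icc_subset_Ici_self)
    (fun t ht => (hz.hasDerivAt ht.1).hasDerivWithinAt) (fun t ht => hzI t (hτ₀I ht)) h
    ⟨le_rfl, hτ₀⟩
  exact ODE_solution_unique_of_mem_Icc_right (fun _ _ => hK)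
    (hy.continuousOn.mono Icc_subset_Ici_self)
    (fun t ht => (hy t ht.1).mono (Ici_subset_Ici.2 ht.1)) (fun t ht => hyI t (hτI ht))
    (hz.continuousOn.mono Icc_subset_Ici_self)
    (fun t ht => (hz t ht.1).mono (Ici_subset_Ici.2 ht.1)) (fun t ht => hzI t (hτI ht)) h0
    ⟨hτ, le_rfl⟩

lemma le_of_le (hf : LocallyLipschitz f) (hy : IsForwardSolution f y) (hc : f c = 0)
    (h0 : y 0 ≤ c) : ∀ τ ∈ Ici 0, y τ ≤ c := by
  intro τ hτ
  rcases h0.lt_or_eq with h0 | h0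
  · refine (isPreconnected_Ici.lt_of_forall_ne hy.continuousOn (fun σ hσ hσc => h0.ne ?_)
      self_mem_Ici h0 hτ).le
    exact hy.eqOn hf (const hc) hσ hσc self_mem_Ici
  · exact (hy.eqOn hf (const hc) le_rfl h0 hτ).le

lemma ge_of_ge (hf : LocallyLipschitz f) (hy : IsForwardSolution f y) (hc : f c = 0)
    (h0 : c ≤ y 0) : ∀ τ ∈ Ici 0, c ≤ y τ := by
  intro τ hτ
  rcases h0.lt_or_eq with h0 | h0
  · refine (isPreconnected_Ici.gt_of_forall_ne hy.continuousOn (fun σ hσ hσc => h0.ne' ?_)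
      self_mem_Ici h0 hτ).le
    exact hy.eqOn hf (const hc) hσ hσc self_mem_Ici
  · exact (hy.eqOn hf (const hc) le_rfl h0.symm hτ).ge

lemma monotoneOn (hy : IsForwardSolution f y) (hpos : ∀ τ ∈ Ici 0, 0 ≤ f (y τ)) :
    MonotoneOn y (Ici 0) :=
  monotoneOn_of_hasDerivWithinAt_nonneg (convex_Ici 0) hy.continuousOn
    (fun τ hτ => (hy.hasDerivAt (by simpa using hτ)).hasDerivWithinAt)
    (fun τ hτ => hpos τ (interior_subset hτ))

lemma apply_eq_zero_of_tendsto (hf : Continuous f) (hy : IsForwardSolution f y)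
    (hL : Tendsto y atTop (𝓝 L)) : f L = 0 := by
  have hmvt : ∀ n : ℕ, ∃ ξ ∈ Ioo (n : ℝ) (n + 1), f (y ξ) = y (n + 1) - y n := fun n => by
    have hn := Nat.cast_nonneg (α := ℝ) n
    obtain ⟨ξ, hξ, h⟩ := exists_hasDerivAt_eq_slope y (fun τ => f (y τ)) (lt_add_one (n : ℝ))
      (hy.continuousOn.mono fun τ hτ => hn.trans hτ.1)
      (fun τ hτ => hy.hasDerivAt (hn.trans_lt hτ.1))
    exact ⟨ξ, hξ, by rwa [add_sub_cancel_left, div_one] at h⟩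
  choose ξ hξ hfξ using hmvt
  have hn : Tendsto (fun n : ℕ => (n : ℝ)) atTop atTop := tendsto_natCast_atTop_atTop
  have hξ_top : Tendsto ξ atTop atTop := tendsto_atTop_mono (fun n => (hξ n).1.le) hn
  have hincr : Tendsto (fun n : ℕ => y (n + 1) - y n) atTop (𝓝 (L - L)) :=
    (hL.comp (tendsto_atTop_add_const_right _ 1 hn)).sub (hL.comp hn)
  rw [sub_self] at hincr
  exact tendsto_nhds_unique (((hf.tendsto L).comp (hL.comp hξ_top)).congr hfξ) hincr

lemma tendsto_of_nonneg (hf : Continuous f) (hy : IsForwardSolution f y)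
    (hpos : ∀ τ ∈ Ici 0, 0 ≤ f (y τ)) (hle : ∀ τ ∈ Ici 0, y τ ≤ c)
    (hroot : ∀ u ∈ Icc (y 0) c, f u = 0 → u = c) : Tendsto y atTop (𝓝 c) := by
  have hmono := hy.monotoneOn hpos
  set L := ⨆ τ : Ici (0 : ℝ), y τ
  have hL : Tendsto y atTop (𝓝 L) := tendsto_comp_val_Ici_atTop.mp <|
    tendsto_atTop_ciSup (fun s t hst => hmono s.2 t.2 hst) ⟨c, by
      rintro _ ⟨t, rfl⟩; exact hle t t.2⟩
  have hy0 : y 0 ≤ L := ge_of_tendsto hL <| (eventually_ge_atTop 0).mono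
    fun τ hτ => hmono self_mem_Ici hτ hτ
  have hLc : L ≤ c := le_of_tendsto hL <| (eventually_ge_atTop 0).mono hle
  rwa [← hroot L ⟨hy0, hLc⟩ (hy.apply_eq_zero_of_tendsto hf hL)]

lemma tendsto_of_nonpos (hf : Continuous f) (hy : IsForwardSolution f y)
    (hneg : ∀ τ ∈ Ici 0, f (y τ) ≤ 0) (hge : ∀ τ ∈ Ici 0, c ≤ y τ)
    (hroot : ∀ u ∈ Icc c (y 0), f u = 0 → u = c) : Tendsto y atTop (𝓝 c) := by
  have := hy.neg.tendsto_of_nonneg (c := -c) (by fun_prop)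
    (fun τ hτ => by simpa using hneg τ hτ) (fun τ hτ => by simpa using hge τ hτ)
    (fun u hu hu0 => by
      rw [← neg_neg u, hroot (-u) ⟨le_neg.mp hu.2, neg_le.mp hu.1⟩ (by simpa using hu0)])
  simpa using this.neg

end IsForwardSolution

noncomputable def stommelField (A μ u : ℝ) : ℝ := μ - u - A * |1 - u| * u

/-- The kink of `stommelField` at `u = 1` is isolated in the Lipschitz map `u ↦ max u 1`. -/
lemma stommelField_eq_max (A μ u : ℝ) :
    stommelField A μ u = μ - u - A * (1 - u) * u - 2 * A * ((max u 1 - 1) * max u 1) := by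
  rcases le_total u 1 with h | h
  · rw [stommelField, abs_of_nonneg (sub_nonneg.2 h), max_eq_right h]; ring
  · rw [stommelField, abs_of_nonpos (sub_nonpos.2 h), max_eq_left h]; ring

lemma locallyLipschitz_stommelField (A μ : ℝ) : LocallyLipschitz (stommelField A μ) := by
  have hpoly : LocallyLipschitz fun u : ℝ => μ - u - A * (1 - u) * u :=
    ContDiff.locallyLipschitz (𝕂 := ℝ) (by fun_prop)
  have hkink : LocallyLipschitz fun u : ℝ => 2 * A * ((max u 1 - 1) * max u 1) :=
    (ContDiff.locallyLipschitz (𝕂 := ℝ) (f := fun v : ℝ => 2 * A * ((v - 1) * v))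
      (by fun_prop)).comp (LocallyLipschitz.id.max_const 1)
  simpa only [funext (stommelField_eq_max A μ)] using hpoly.sub hkink

lemma stommelField_sign_pattern {A μ y₁ y₂ y₃ : ℝ} (hA : 1 < A) (hμ1 : 1 < μ)
    (hμ2 : μ < (1 + A) ^ 2 / (4 * A)) (h12 : y₁ < y₂) (h23 : y₂ < y₃)
    (hzero : ∀ u, stommelField A μ u = 0 → u = y₁ ∨ u = y₂ ∨ u = y₃) :
    (∀ u ≤ y₁, 0 ≤ stommelField A μ u) ∧ (∀ u ∈ Icc y₁ y₂, stommelField A μ u ≤ 0) ∧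
      (∀ u ∈ Icc y₂ y₃, 0 ≤ stommelField A μ u) ∧ ∀ u, y₃ ≤ u → stommelField A μ u ≤ 0 := by
  have hA0 : 0 < A := by linarith
  have hm0 : 0 < (1 + A) / (2 * A) := by positivity
  have hm1 : (1 + A) / (2 * A) < 1 := by rw [div_lt_one (by positivity)]; linarith
  have hfold : stommelField A μ ((1 + A) / (2 * A)) = μ - (1 + A) ^ 2 / (4 * A) := by
    rw [stommelField, abs_of_pos (sub_pos.2 hm1)]
    field_simp
    ring
  have hμ2' : μ < 2 + 2 * A := hμ2.trans <| by rw [div_lt_iff₀ (by positivity)]; nlinarith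
  exact (locallyLipschitz_stommelField A μ).continuous.sign_pattern_of_three_zeros h12 h23 hzero
    hm0 hm1 one_lt_two (by simp [stommelField]; linarith) (by rw [hfold]; linarith)
    (by simp [stommelField]; linarith) (by norm_num [stommelField]; linarith)

/-- Bistability of the reduced Stommel equation for `A > 1` and
`1 < μ < (1+A)²/(4A)`: solutions starting below the middle equilibrium `y₂`
converge to `y₁`, those starting above converge to `y₃`, and those starting at
`y₂` stay there; the outer equilibria are stable and the middle one unstable. -/
theorem stommel_bistable_convergence (A μ y₁ y₂ y₃ : ℝ) (hA : 1 < A)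
    (hμ1 : 1 < μ) (hμ2 : μ < (1 + A) ^ 2 / (4 * A))
    (h12 : y₁ < y₂) (h23 : y₂ < y₃)
    (hy₁ : μ = y₁ + A * |1 - y₁| * y₁)
    (hy₂ : μ = y₂ + A * |1 - y₂| * y₂)
    (hy₃ : μ = y₃ + A * |1 - y₃| * y₃)
    (honly : ∀ y : ℝ, μ = y + A * |1 - y| * y → (y = y₁ ∨ y = y₂ ∨ y = y₃))
    (y : ℝ → ℝ)
    (hode : ∀ τ ∈ Set.Ici (0 : ℝ),
      HasDerivWithinAt y (μ - y τ - A * |1 - y τ| * y τ) (Set.Ici 0) τ) :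
    (y 0 < y₂ → Filter.Tendsto y Filter.atTop (nhds y₁)) ∧
    (y 0 > y₂ → Filter.Tendsto y Filter.atTop (nhds y₃)) ∧
    (y 0 = y₂ → ∀ τ ∈ Set.Ici (0 : ℝ), y τ = y₂) := by
  set f := stommelField A μ
  have hsol : IsForwardSolution f y := hode
  have hlip : LocallyLipschitz f := locallyLipschitz_stommelField A μ
  have hzero : ∀ u, f u = 0 → u = y₁ ∨ u = y₂ ∨ u = y₃ :=
    fun u hu => honly u (by simp only [f, stommelField] at hu; linarith)
  obtain ⟨hf₁, hf₂, hf₃⟩ : f y₁ = 0 ∧ f y₂ = 0 ∧ f y₃ = 0 := by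
    simp only [f, stommelField]; refine ⟨?_, ?_, ?_⟩ <;> linarith
  obtain ⟨hs₁, hs₁₂, hs₂₃, hs₃⟩ := stommelField_sign_pattern hA hμ1 hμ2 h12 h23 hzero
  refine ⟨fun h0 => ?_, fun h0 => ?_, fun h0 => hsol.eqOn hlip (.const hf₂) le_rfl h0⟩
  · rcases le_total (y 0) y₁ with h | h
    · have hle := hsol.le_of_le hlip hf₁ h
      refine hsol.tendsto_of_nonneg hlip.continuous (fun τ hτ => hs₁ _ (hle τ hτ)) hle ?_
      exact fun u hu hu0 => by obtain rfl | rfl | rfl := hzero u hu0 <;> linarith [hu.1, hu.2]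
    · have hge := hsol.ge_of_ge hlip hf₁ h
      have hle := hsol.le_of_le hlip hf₂ h0.le
      refine hsol.tendsto_of_nonpos hlip.continuous (fun τ hτ => hs₁₂ _ ⟨hge τ hτ, hle τ hτ⟩) hge ?_
      exact fun u hu hu0 => by obtain rfl | rfl | rfl := hzero u hu0 <;> linarith [hu.1, hu.2]
  · rcases le_total (y 0) y₃ with h | h
    · have hge := hsol.ge_of_ge hlip hf₂ h0.le
      have hle := hsol.le_of_le hlip hf₃ h
      refine hsol.tendsto_of_nonneg hlip.continuous (fun τ hτ => hs₂₃ _ ⟨hge τ hτ, hle τ hτ⟩) hle ?_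
      exact fun u hu hu0 => by obtain rfl | rfl | rfl := hzero u hu0 <;> linarith [hu.1, hu.2]
    · have hge := hsol.ge_of_ge hlip hf₃ h
      refine hsol.tendsto_of_nonpos hlip.continuous (fun τ hτ => hs₃ _ (hge τ hτ)) hge ?_
      exact fun u hu hu0 => by obtain rfl | rfl | rfl := hzero u hu0 <;> linarith [hu.1, hu.2]
end
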